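/- arXiv:2502.05059 — 2 statements merged into one kernel-verified Lean document; each statement's English description precedes it below -/
import Mathlib

section
/- Let H' be a d-labeled graph, let i ≠ j be labels, let H = ρ_{i→j}(H'), and let S ⊆ V(H') have characteristic (α', β') in H'. Then the characteristic (α, β) of S in H satisfies, for every I ⊆ {1,…,d}: if j ∈ I then (α(I), β(I)) = (α'(I ∪ {i}), β'(I ∪ {i})), and if j ∉ I then (α(I), β(I)) = (α'(I ∖ {i}), β'(I ∖ {i})). -/
open Finset

variable {V : Type*} {d : ℕ}

/-- `M` is a vertex cover of `(H with vertex set A) − S`: `M ⊆ A \ S` and every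
edge of `H` with both endpoints outside `S` has an endpoint in `M`. -/
def IsVCDel [DecidableEq V] (H : SimpleGraph V) (A S M : Finset V) : Prop :=
  M ⊆ A \ S ∧ ∀ ⦃u v : V⦄, H.Adj u v → u ∉ S → v ∉ S → u ∈ M ∨ v ∈ M

/-- All edges of the `d`-labeled graph `H` lie inside its vertex set `A`. -/
def IsLabeledGraph (H : SimpleGraph V) (A : Finset V) : Prop :=
  ∀ ⦃u v : V⦄, H.Adj u v → u ∈ A ∧ v ∈ A

/-- `T` extends type `I` in the graph with vertex set `B` and labeling `lab`:
every label of `I` is full, i.e. all vertices of `B` carrying it lie in `T`. -/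
def ExtendsType (B : Finset V) (lab : V → Fin d) (I : Finset (Fin d)) (T : Finset V) : Prop :=
  ∀ i ∈ I, ∀ w ∈ B, lab w = i → w ∈ T

/-- `(α, β)` is the characteristic of `S` in the `d`-labeled graph
`(H, A, lab)`: for each set of labels `I`, `α I` is the minimum cardinality of
a vertex cover of `H − S` extending type `I`, and `β I = 1` iff there is
exactly one vertex cover of `H − S` of cardinality `α I` extending type `I`
(and `β I = 2` otherwise). -/
def IsLabChar [DecidableEq V] (H : SimpleGraph V) (A : Finset V) (lab : V → Fin d)
    (S : Finset V) (α β : Finset (Fin d) → ℕ) : Prop :=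
  ∀ I : Finset (Fin d),
    (∃ M, (IsVCDel H A S M ∧ ExtendsType (A \ S) lab I M) ∧ M.card = α I) ∧
    (∀ M, IsVCDel H A S M ∧ ExtendsType (A \ S) lab I M → α I ≤ M.card) ∧
    (β I = 1 ∨ β I = 2) ∧
    (β I = 1 ↔ ∃! M, (IsVCDel H A S M ∧ ExtendsType (A \ S) lab I M) ∧ M.card = α I)

/-- `η_{i,j}`: add an edge between every vertex with label `i` and every vertex
with label `j` (inside the vertex set `A`). -/
def etaGraph [DecidableEq V] (H : SimpleGraph V) (A : Finset V) (lab : V → Fin d)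
    (i j : Fin d) : SimpleGraph V :=
  H ⊔ SimpleGraph.fromEdgeSet
    {e | ∃ u ∈ A, ∃ w ∈ A, lab u = i ∧ lab w = j ∧ e = s(u, w)}

/-!
Relabeling `i` to `j` changes neither the graph nor the set of vertex covers of `H − S`; it
only changes which covers extend a given type. A cover full on label `j` after relabeling is
one full on both `i` and `j` before, while for `j ∉ I` the label `i` no longer occurs among
the labels `I` asks about. So the covers extending `I` after relabeling are exactly those
extending `insert i I`, resp. `I.erase i`, before, and the characteristic only depends on
which covers extend the type.
-/

section Characteristic

variable [DecidableEq V] {H : SimpleGraph V} {A S : Finset V} {lab lab' : V → Fin d}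
  {α β α' β' : Finset (Fin d) → ℕ}

open Classical in
theorem IsLabChar.beta_eq (h : IsLabChar H A lab S α β) (I : Finset (Fin d)) :
    β I = if ∃! M, (IsVCDel H A S M ∧ ExtendsType (A \ S) lab I M) ∧ M.card = α I
      then 1 else 2 := by
  obtain ⟨-, -, hβ, hβ_one⟩ := h I
  split_ifs with huniq
  · exact hβ_one.mpr huniq
  · exact hβ.resolve_left (mt hβ_one.mp huniq)

open Classical in
theorem IsLabChar.eq_of_extendsType_iff (h : IsLabChar H A lab S α β)
    (h' : IsLabChar H A lab' S α' β') {I J : Finset (Fin d)}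
    (hIJ : ∀ M, ExtendsType (A \ S) lab I M ↔ ExtendsType (A \ S) lab' J M) :
    α I = α' J ∧ β I = β' J := by
  obtain ⟨⟨M, hM, hM_card⟩, hmin, -⟩ := h I
  obtain ⟨⟨M', hM', hM'_card⟩, hmin', -⟩ := h' J
  have hα : α I = α' J := le_antisymm
    (hM'_card ▸ hmin M' ⟨hM'.1, (hIJ M').mpr hM'.2⟩)
    (hM_card ▸ hmin' M ⟨hM.1, (hIJ M).mp hM.2⟩)
  refine ⟨hα, ?_⟩
  rw [h.beta_eq, h'.beta_eq]
  simp only [hIJ, hα]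

end Characteristic

section Relabel

/-- `ρ_{i→j}` on labelings. -/
def relabel (lab : V → Fin d) (i j : Fin d) : V → Fin d :=
  fun w => if lab w = i then j else lab w

variable {B T : Finset V} {lab : V → Fin d} {i j : Fin d} {I : Finset (Fin d)} {w : V}

theorem relabel_apply_of_eq (h : lab w = i) : relabel lab i j w = j := if_pos h

theorem relabel_apply_of_ne (h : lab w ≠ i) : relabel lab i j w = lab w := if_neg h

theorem extendsType_relabel_iff_of_mem (hj : j ∈ I) :
    ExtendsType B (relabel lab i j) I T ↔ ExtendsType B lab (insert i I) T := by
  constructor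
  · intro hT k hk w hw hlab
    by_cases hwi : lab w = i
    · exact hT j hj w hw (relabel_apply_of_eq hwi)
    · have hkI : k ∈ I := (mem_insert.mp hk).resolve_left (hlab ▸ hwi)
      exact hT k hkI w hw ((relabel_apply_of_ne hwi).trans hlab)
  · intro hT k hk w hw hlab
    by_cases hwi : lab w = i
    · exact hT i (mem_insert_self i I) w hw hwi
    · rw [relabel_apply_of_ne hwi] at hlab
      exact hT k (mem_insert_of_mem hk) w hw hlab

theorem extendsType_relabel_iff_of_notMem (hj : j ∉ I) :
    ExtendsType B (relabel lab i j) I T ↔ ExtendsType B lab (I.erase i) T := by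
  constructor
  · intro hT k hk w hw hlab
    have hwi : lab w ≠ i := hlab ▸ ne_of_mem_erase hk
    exact hT k (mem_of_mem_erase hk) w hw ((relabel_apply_of_ne hwi).trans hlab)
  · intro hT k hk w hw hlab
    by_cases hwi : lab w = i
    · rw [relabel_apply_of_eq hwi] at hlab
      exact absurd (hlab ▸ hk) hj
    · rw [relabel_apply_of_ne hwi] at hlab
      exact hT k (mem_erase.mpr ⟨hlab ▸ hwi, hk⟩) w hw hlab

end Relabel

theorem char_rho_general [DecidableEq V]
    (H' : SimpleGraph V) (A : Finset V) (lab : V → Fin d)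
    (i j : Fin d)
    (S : Finset V)
    (α' β' α β : Finset (Fin d) → ℕ)
    (h' : IsLabChar H' A lab S α' β')
    (h : IsLabChar H' A (fun w => if lab w = i then j else lab w) S α β) :
    ∀ I : Finset (Fin d),
      (j ∈ I → α I = α' (insert i I) ∧ β I = β' (insert i I)) ∧
      (j ∉ I → α I = α' (I.erase i) ∧ β I = β' (I.erase i)) := by
  intro I
  change IsLabChar H' A (relabel lab i j) S α β at h
  exact ⟨fun hj => h.eq_of_extendsType_iff h' fun _ => extendsType_relabel_iff_of_mem hj,
    fun hj => h.eq_of_extendsType_iff h' fun _ => extendsType_relabel_iff_of_notMem hj⟩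

/-- The effect of the relabeling operation `ρ_{i→j}` (changing every label `i`
to `j`) on the characteristic of a fixed set `S` in a `d`-labeled graph. -/
theorem char_rho [Fintype V] [DecidableEq V]
    (H' : SimpleGraph V) (A : Finset V) (lab : V → Fin d)
    (hH' : IsLabeledGraph H' A) (i j : Fin d) (hij : i ≠ j)
    (S : Finset V) (hS : S ⊆ A)
    (α' β' α β : Finset (Fin d) → ℕ)
    (h' : IsLabChar H' A lab S α' β')
    (h : IsLabChar H' A (fun w => if lab w = i then j else lab w) S α β) :
    ∀ I : Finset (Fin d),
      (j ∈ I → α I = α' (insert i I) ∧ β I = β' (insert i I)) ∧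
      (j ∉ I → α I = α' (I.erase i) ∧ β I = β' (I.erase i)) :=
  char_rho_general H' A lab i j S α' β' α β h' h
end

section
/- Let H₁ and H₂ be d-labeled graphs on disjoint vertex sets and let H = H₁ ⊕ H₂ be their disjoint union. Let S₁ ⊆ V(H₁) have characteristic (α₁, β₁) in H₁ and let S₂ ⊆ V(H₂) have characteristic (α₂, β₂) in H₂. Then the characteristic (α, β) of S₁ ∪ S₂ in H satisfies, for every I ⊆ {1,…,d}: α(I) = α₁(I) + α₂(I), and β(I) = 1 if and only if β₁(I) = 1 and β₂(I) = 1. -/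
open Finset

variable {V : Type*} {d : ℕ}

/-!
Intersecting with `A₁` and `A₂` splits a vertex cover of `(H₁ ⊕ H₂) − (S₁ ∪ S₂)` extending
type `I` into such covers of `H₁ − S₁` and `H₂ − S₂`, and conversely the union of two such
covers is one; since `A₁` and `A₂` are disjoint, `(M₁, M₂) ↦ M₁ ∪ M₂` is a bijection between
pairs of covers and covers of the union that adds cardinalities. So minimum sizes add, and the
minimum covers of the union are exactly the unions of pairs of minimum covers: their number is
the product of the two numbers, which is `1` iff both are `1`.
-/

open Set

section DisjointUnion

variable [DecidableEq V] {s t : Set (Finset V)}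

theorem injOn_union_prod (hst : ∀ M ∈ s, ∀ N ∈ t, Disjoint M N) :
    InjOn (fun p : Finset V × Finset V => p.1 ∪ p.2) (s ×ˢ t) := by
  rintro ⟨M, N⟩ ⟨hM, hN⟩ ⟨M', N'⟩ ⟨hM', hN'⟩ (hunion : M ∪ N = M' ∪ N')
  have hMN := hunion.subset
  have hMN' := hunion.symm.subset
  refine Prod.ext (le_antisymm ?_ ?_) (le_antisymm ?_ ?_)
  · exact Disjoint.left_le_of_le_sup_right (union_subset_left hMN) (hst M hM N' hN')
  · exact Disjoint.left_le_of_le_sup_right (union_subset_left hMN') (hst M' hM' N hN)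
  · exact Disjoint.left_le_of_le_sup_left (union_subset_right hMN) (hst M' hM' N hN).symm
  · exact Disjoint.left_le_of_le_sup_left (union_subset_right hMN') (hst M hM N' hN').symm

theorem ncard_image2_union (hst : ∀ M ∈ s, ∀ N ∈ t, Disjoint M N) :
    (image2 (· ∪ ·) s t).ncard = s.ncard * t.ncard := by
  rw [← image_prod, (injOn_union_prod hst).ncard_image, ncard_prod]

theorem card_image_image2_union (hst : ∀ M ∈ s, ∀ N ∈ t, Disjoint M N) :
    Finset.card '' image2 (· ∪ ·) s t = image2 (· + ·) (Finset.card '' s) (Finset.card '' t) := by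
  rw [image_image2, image2_image_left, image2_image_right]
  exact image2_congr fun M hM N hN => card_union_of_disjoint (hst M hM N hN)

theorem isLeast_card_image2_union (hst : ∀ M ∈ s, ∀ N ∈ t, Disjoint M N) {a b : ℕ}
    (ha : IsLeast (Finset.card '' s) a) (hb : IsLeast (Finset.card '' t) b) :
    IsLeast (Finset.card '' image2 (· ∪ ·) s t) (a + b) := by
  rw [card_image_image2_union hst]
  refine ⟨mem_image2_of_mem ha.1 hb.1, ?_⟩
  rintro _ ⟨m, hm, n, hn, rfl⟩
  exact add_le_add (ha.2 hm) (hb.2 hn)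

theorem sep_card_eq_add_image2_union (hst : ∀ M ∈ s, ∀ N ∈ t, Disjoint M N) {a b : ℕ}
    (ha : a ∈ lowerBounds (Finset.card '' s)) (hb : b ∈ lowerBounds (Finset.card '' t)) :
    {M ∈ image2 (· ∪ ·) s t | M.card = a + b} =
      image2 (· ∪ ·) {M ∈ s | M.card = a} {N ∈ t | N.card = b} := by
  ext M
  constructor
  · rintro ⟨⟨M₁, h₁, M₂, h₂, rfl⟩, hcard⟩
    rw [card_union_of_disjoint (hst M₁ h₁ M₂ h₂)] at hcard
    have ha₁ := ha (mem_image_of_mem _ h₁)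
    have hb₂ := hb (mem_image_of_mem _ h₂)
    exact ⟨M₁, ⟨h₁, by omega⟩, M₂, ⟨h₂, by omega⟩, rfl⟩
  · rintro ⟨M₁, ⟨h₁, rfl⟩, M₂, ⟨h₂, rfl⟩, rfl⟩
    exact ⟨mem_image2_of_mem h₁ h₂, card_union_of_disjoint (hst M₁ h₁ M₂ h₂)⟩

end DisjointUnion

section Covers

variable {lab : V → Fin d} {I : Finset (Fin d)}

theorem ExtendsType.mono {B T T' : Finset V} (h : ExtendsType B lab I T) (hT : T ⊆ T') :
    ExtendsType B lab I T' :=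
  fun i hi w hw hlab => hT (h i hi w hw hlab)

variable [DecidableEq V]

theorem union_sdiff_union_of_disjoint {A₁ A₂ S₁ S₂ : Finset V} (h₁₂ : Disjoint A₁ S₂)
    (h₂₁ : Disjoint A₂ S₁) : (A₁ ∪ A₂) \ (S₁ ∪ S₂) = A₁ \ S₁ ∪ A₂ \ S₂ := by
  ext x
  have hx₁ : x ∈ A₁ → x ∉ S₂ := fun hx => Finset.disjoint_left.mp h₁₂ hx
  have hx₂ : x ∈ A₂ → x ∉ S₁ := fun hx => Finset.disjoint_left.mp h₂₁ hx
  simp only [Finset.mem_sdiff, Finset.mem_union]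
  tauto

theorem ExtendsType.inter {A B T : Finset V} (h : ExtendsType B lab I T) (hB : B ⊆ A) :
    ExtendsType B lab I (T ∩ A) :=
  fun i hi w hw hlab => Finset.mem_inter.mpr ⟨h i hi w hw hlab, hB hw⟩

theorem extendsType_union {B₁ B₂ T : Finset V} :
    ExtendsType (B₁ ∪ B₂) lab I T ↔ ExtendsType B₁ lab I T ∧ ExtendsType B₂ lab I T := by
  simp only [ExtendsType, Finset.mem_union]
  grind

theorem IsVCDel.subset {H : SimpleGraph V} {A S M : Finset V} (h : IsVCDel H A S M) :
    M ⊆ A :=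
  h.1.trans sdiff_subset

variable {H₁ H₂ : SimpleGraph V} {A₁ A₂ S₁ S₂ M M₁ M₂ : Finset V}

theorem IsVCDel.sup (h₁ : IsVCDel H₁ A₁ S₁ M₁) (h₂ : IsVCDel H₂ A₂ S₂ M₂)
    (h₁₂ : Disjoint A₁ S₂) (h₂₁ : Disjoint A₂ S₁) :
    IsVCDel (H₁ ⊔ H₂) (A₁ ∪ A₂) (S₁ ∪ S₂) (M₁ ∪ M₂) := by
  refine ⟨?_, ?_⟩
  · rw [union_sdiff_union_of_disjoint h₁₂ h₂₁]
    exact union_subset_union h₁.1 h₂.1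
  · rintro u v (huv | huv) hu hv <;> simp only [Finset.mem_union, not_or] at hu hv
    · exact (h₁.2 huv hu.1 hv.1).imp (mem_union_left _) (mem_union_left _)
    · exact (h₂.2 huv hu.2 hv.2).imp (mem_union_right _) (mem_union_right _)

theorem IsVCDel.inter_left (h : IsVCDel (H₁ ⊔ H₂) (A₁ ∪ A₂) (S₁ ∪ S₂) M)
    (hH₁ : IsLabeledGraph H₁ A₁) (h₁₂ : Disjoint A₁ S₂) : IsVCDel H₁ A₁ S₁ (M ∩ A₁) := by
  refine ⟨fun x hx => ?_, fun u v huv hu hv => ?_⟩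
  · obtain ⟨hxM, hxA⟩ := Finset.mem_inter.mp hx
    have hxS := (Finset.mem_sdiff.mp (h.1 hxM)).2
    exact Finset.mem_sdiff.mpr ⟨hxA, fun hxS₁ => hxS (mem_union_left _ hxS₁)⟩
  · obtain ⟨huA, hvA⟩ := hH₁ huv
    have hu' : u ∉ S₁ ∪ S₂ := by simp [hu, disjoint_left.mp h₁₂ huA]
    have hv' : v ∉ S₁ ∪ S₂ := by simp [hv, disjoint_left.mp h₁₂ hvA]
    exact (h.2 (Or.inl huv) hu' hv').imp (fun huM => mem_inter.mpr ⟨huM, huA⟩)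
      (fun hvM => mem_inter.mpr ⟨hvM, hvA⟩)

def typedCovers (H : SimpleGraph V) (A : Finset V) (lab : V → Fin d) (S : Finset V)
    (I : Finset (Fin d)) : Set (Finset V) :=
  {M | IsVCDel H A S M ∧ ExtendsType (A \ S) lab I M}

theorem union_mem_typedCovers_sup (h₁₂ : Disjoint A₁ S₂) (h₂₁ : Disjoint A₂ S₁)
    (hM₁ : M₁ ∈ typedCovers H₁ A₁ lab S₁ I) (hM₂ : M₂ ∈ typedCovers H₂ A₂ lab S₂ I) :
    M₁ ∪ M₂ ∈ typedCovers (H₁ ⊔ H₂) (A₁ ∪ A₂) lab (S₁ ∪ S₂) I := by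
  refine ⟨hM₁.1.sup hM₂.1 h₁₂ h₂₁, ?_⟩
  rw [union_sdiff_union_of_disjoint h₁₂ h₂₁, extendsType_union]
  exact ⟨hM₁.2.mono subset_union_left, hM₂.2.mono subset_union_right⟩

theorem inter_left_mem_typedCovers (hH₁ : IsLabeledGraph H₁ A₁) (h₁₂ : Disjoint A₁ S₂)
    (h₂₁ : Disjoint A₂ S₁) (hM : M ∈ typedCovers (H₁ ⊔ H₂) (A₁ ∪ A₂) lab (S₁ ∪ S₂) I) :
    M ∩ A₁ ∈ typedCovers H₁ A₁ lab S₁ I := by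
  refine ⟨hM.1.inter_left hH₁ h₁₂, ?_⟩
  have hext := hM.2
  rw [union_sdiff_union_of_disjoint h₁₂ h₂₁, extendsType_union] at hext
  exact hext.1.inter sdiff_subset

theorem typedCovers_sup (hH₁ : IsLabeledGraph H₁ A₁) (hH₂ : IsLabeledGraph H₂ A₂)
    (h₁₂ : Disjoint A₁ S₂) (h₂₁ : Disjoint A₂ S₁) :
    typedCovers (H₁ ⊔ H₂) (A₁ ∪ A₂) lab (S₁ ∪ S₂) I =
      image2 (· ∪ ·) (typedCovers H₁ A₁ lab S₁ I) (typedCovers H₂ A₂ lab S₂ I) := by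
  refine Subset.antisymm (fun M hM => ?_) ?_
  · have hM' : M ∈ typedCovers (H₂ ⊔ H₁) (A₂ ∪ A₁) lab (S₂ ∪ S₁) I := by
      rwa [sup_comm, Finset.union_comm A₂, Finset.union_comm S₂]
    refine ⟨M ∩ A₁, inter_left_mem_typedCovers hH₁ h₁₂ h₂₁ hM,
      M ∩ A₂, inter_left_mem_typedCovers hH₂ h₂₁ h₁₂ hM', ?_⟩
    exact (inter_union_distrib_left M A₁ A₂).symm.trans (inter_eq_left.mpr hM.1.subset)
  · rintro _ ⟨M₁, hM₁, M₂, hM₂, rfl⟩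
    exact union_mem_typedCovers_sup h₁₂ h₂₁ hM₁ hM₂

theorem disjoint_of_mem_typedCovers (hA : Disjoint A₁ A₂)
    (hM₁ : M₁ ∈ typedCovers H₁ A₁ lab S₁ I) (hM₂ : M₂ ∈ typedCovers H₂ A₂ lab S₂ I) :
    Disjoint M₁ M₂ :=
  hA.mono hM₁.1.subset hM₂.1.subset

theorem IsLabChar.isLeast {H : SimpleGraph V} {A S : Finset V} {α β : Finset (Fin d) → ℕ}
    (h : IsLabChar H A lab S α β) (I : Finset (Fin d)) :
    IsLeast (Finset.card '' typedCovers H A lab S I) (α I) :=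
  ⟨(h I).1, by rintro _ ⟨M, hM, rfl⟩; exact (h I).2.1 M hM⟩

theorem IsLabChar.beta_eq_one_iff {H : SimpleGraph V} {A S : Finset V} {α β : Finset (Fin d) → ℕ}
    (h : IsLabChar H A lab S α β) (I : Finset (Fin d)) :
    β I = 1 ↔ {M ∈ typedCovers H A lab S I | M.card = α I}.ncard = 1 := by
  rw [(h I).2.2.2, ncard_eq_one]
  simp_rw [Set.eq_singleton_iff_unique_mem]
  rfl

end Covers

theorem char_disjoint_union_general [DecidableEq V]
    (H₁ H₂ : SimpleGraph V) (A₁ A₂ : Finset V) (lab : V → Fin d)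
    (hH₁ : IsLabeledGraph H₁ A₁) (hH₂ : IsLabeledGraph H₂ A₂)
    (hdisj : A₁ ∩ A₂ = ∅)
    (S₁ S₂ : Finset V) (hS₁ : S₁ ⊆ A₁) (hS₂ : S₂ ⊆ A₂)
    (α₁ β₁ α₂ β₂ α β : Finset (Fin d) → ℕ)
    (h₁ : IsLabChar H₁ A₁ lab S₁ α₁ β₁)
    (h₂ : IsLabChar H₂ A₂ lab S₂ α₂ β₂)
    (h : IsLabChar (H₁ ⊔ H₂) (A₁ ∪ A₂) lab (S₁ ∪ S₂) α β) :
    ∀ I : Finset (Fin d),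
      α I = α₁ I + α₂ I ∧ (β I = 1 ↔ β₁ I = 1 ∧ β₂ I = 1) := by
  intro I
  have hA : Disjoint A₁ A₂ := disjoint_iff_inter_eq_empty.mpr hdisj
  have hcovers := typedCovers_sup (lab := lab) (I := I) hH₁ hH₂ (hA.mono_right hS₂)
    (hA.symm.mono_right hS₁)
  have hst : ∀ M₁ ∈ typedCovers H₁ A₁ lab S₁ I, ∀ M₂ ∈ typedCovers H₂ A₂ lab S₂ I,
      Disjoint M₁ M₂ := fun _ hM₁ _ hM₂ => disjoint_of_mem_typedCovers hA hM₁ hM₂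
  have hα : α I = α₁ I + α₂ I :=
    (h.isLeast I).unique (hcovers ▸ isLeast_card_image2_union hst (h₁.isLeast I) (h₂.isLeast I))
  refine ⟨hα, ?_⟩
  rw [h.beta_eq_one_iff, h₁.beta_eq_one_iff, h₂.beta_eq_one_iff, hα, hcovers,
    sep_card_eq_add_image2_union hst (h₁.isLeast I).2 (h₂.isLeast I).2,
    ncard_image2_union fun M₁ hM₁ M₂ hM₂ => hst M₁ hM₁.1 M₂ hM₂.1, mul_eq_one]

/-- Disjoint union of two `d`-labeled graphs: the characteristic of `S₁ ∪ S₂`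
in `H₁ ⊕ H₂` is obtained componentwise. -/
theorem char_disjoint_union [Fintype V] [DecidableEq V]
    (H₁ H₂ : SimpleGraph V) (A₁ A₂ : Finset V) (lab : V → Fin d)
    (hH₁ : IsLabeledGraph H₁ A₁) (hH₂ : IsLabeledGraph H₂ A₂)
    (hdisj : A₁ ∩ A₂ = ∅)
    (S₁ S₂ : Finset V) (hS₁ : S₁ ⊆ A₁) (hS₂ : S₂ ⊆ A₂)
    (α₁ β₁ α₂ β₂ α β : Finset (Fin d) → ℕ)
    (h₁ : IsLabChar H₁ A₁ lab S₁ α₁ β₁)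
    (h₂ : IsLabChar H₂ A₂ lab S₂ α₂ β₂)
    (h : IsLabChar (H₁ ⊔ H₂) (A₁ ∪ A₂) lab (S₁ ∪ S₂) α β) :
    ∀ I : Finset (Fin d),
      α I = α₁ I + α₂ I ∧ (β I = 1 ↔ β₁ I = 1 ∧ β₂ I = 1) :=
  char_disjoint_union_general H₁ H₂ A₁ A₂ lab hH₁ hH₂ hdisj S₁ S₂ hS₁ hS₂ α₁ β₁ α₂ β₂ α β h₁ h₂ h
end
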